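/- For every irrational x ∈ (0,1) and every n ≥ 1, x = h_{(a₁,ε₁)_{s₁}} ∘ h_{(a₂,ε₂)_{s₂}} ∘ ⋯ ∘ h_{(a_n,ε_n)_{s_n}}(Tⁿ(x)), where (a_i,ε_i)_{s_i} are the SCF digits of x; moreover |x − P_n(x)/Q_n(x)| ≤ 4^{−n}, so the SCF convergents P_n(x)/Q_n(x) converge to x as n → ∞. -/

import Mathlib

/-!
Every branch of `T` is a Möbius map inverted by the corresponding `h_d`, so
`x = h_{A₁} ∘ ⋯ ∘ h_{A_n} (Tⁿ x)` follows by induction along the orbit; irrationality is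
preserved by these integral Möbius maps and keeps the orbit away from the (rational) branch
endpoints. The odd branches are the even ones conjugated by the involution `ι`, so only the
even branches need a direct computation.

Each `h_d` is the Möbius map of `M_d`, whose determinant is `∓1` and whose denominator is at
least `2` on `[0,1]`; hence `h_d` is a `1/4`-contraction of `[0,1]`. Since `M_n` sends `(t, 1)`
to a positive multiple of `(h_{A₁} ∘ ⋯ ∘ h_{A_n} (t), 1)`, the convergent `P_n/Q_n` is this
composition at `t = 0`, and `|x − P_n/Q_n| ≤ 4⁻ⁿ |Tⁿ x − 0| ≤ 4⁻ⁿ`.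
-/

open MeasureTheory Real Set Filter Topology

namespace SCF

/-- The involution `ι(x) = (1−x)/(1+x)`. -/
noncomputable def iota (x : ℝ) : ℝ := (1 - x) / (1 + x)

/-- Even continued-fraction step.  For `y ∈ (0,1/2]` one has
`⌊(1/y+1)/2⌋ = k` whenever `1/y ∈ (2k−1, 2k+1)`, so `Te y = |1/y − 2k|`;
explicitly `Te y = 1/y − 2` on `[1/3,1/2]`, `Te y = 1/y − 2k` on
`[1/(2k+1), 1/(2k))` and `Te y = 2k − 1/y` on `[1/(2k), 1/(2k−1))` (`k ≥ 2`). -/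
noncomputable def Te (y : ℝ) : ℝ := |1 / y - 2 * (⌊(1 / y + 1) / 2⌋ : ℝ)|

/-- The spliced continued fraction (SCF) map `T : [0,1] → [0,1]`, with
`T 0 = 0`, `T 1 = 1`.  On `(0,1/2]` it is the even continued fraction map
(see `Te`), and on `(1/2,1)` it is the odd–odd map, which is the conjugate
`ι ∘ Te ∘ ι` of the even map; this agrees with the branchwise definition:
`T x = (k x − (k−1))/(k − (k+1) x)` on `((k−1)/k, (2k−1)/(2k+1)]` and
`T x = (k − (k+1) x)/(k x − (k−1))` on `((2k−1)/(2k+1), k/(k+1)]` for `k ≥ 2`. -/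
noncomputable def T (x : ℝ) : ℝ :=
  if x ≤ 0 then 0
  else if 1 ≤ x then 1
  else if x ≤ 1 / 2 then Te x
  else iota (Te (iota x))

/-- Parity label of a digit: `e` (even cusp) or `o` (odd–odd cusp). -/
inductive Par | e | o
deriving DecidableEq

/-- A candidate SCF digit `(a, ε)_s`. -/
structure Digit where
  a : ℤ
  eps : ℤ
  s : Par
deriving DecidableEq

/-- The digit set `𝒜 = {(k,ε)_s : k ≥ 2, ε = ±1, s ∈ {e,o}} ∪ {(1,+1)_e}`. -/
def Digit.Valid (d : Digit) : Prop :=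
  (2 ≤ d.a ∧ (d.eps = 1 ∨ d.eps = -1)) ∨ (d.a = 1 ∧ d.eps = 1 ∧ d.s = Par.e)

/-- The branch intervals `I_{(a,ε)_s}` of the SCF map. -/
noncomputable def branch (d : Digit) : Set ℝ :=
  match d.s with
  | Par.e =>
      if d.a = 1 then Set.Icc (1/3 : ℝ) (1/2)
      else if d.eps = 1 then Set.Ico (1 / (2 * (d.a : ℝ) + 1)) (1 / (2 * (d.a : ℝ)))
      else Set.Ico (1 / (2 * (d.a : ℝ))) (1 / (2 * (d.a : ℝ) - 1))
  | Par.o =>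
      if d.eps = 1 then
        Set.Ioc ((2 * (d.a : ℝ) - 1) / (2 * (d.a : ℝ) + 1)) ((d.a : ℝ) / ((d.a : ℝ) + 1))
      else
        Set.Ioc (((d.a : ℝ) - 1) / (d.a : ℝ)) ((2 * (d.a : ℝ) - 1) / (2 * (d.a : ℝ) + 1))

open Classical in
/-- The SCF digit of a point `y` (the unique valid digit `d` with `y ∈ I_d`;
well defined for every `y ∈ (0,1)`). -/
noncomputable def digit (y : ℝ) : Digit :=
  if h : ∃ d : Digit, d.Valid ∧ y ∈ branch d then h.choose else ⟨1, 1, Par.e⟩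

/-- The `n`-th SCF digit `(a_n(x), ε_n(x))_{s_n(x)}` of `x`, `n ≥ 1`,
determined by `T^[n−1] x ∈ I_{(a_n,ε_n)_{s_n}}`. -/
noncomputable def dig (n : ℕ) (x : ℝ) : Digit := digit (T^[n - 1] x)

/-- The `n`-th SCF partial quotient `a_n(x)`. -/
noncomputable def a (n : ℕ) (x : ℝ) : ℤ := (dig n x).a

/-- The invariant density `f_μ`. -/
noncomputable def fdens (x : ℝ) : ℝ :=
  2 / (Real.log (2 + Real.sqrt 3) * (1 - (2 - Real.sqrt 3) * x) * (1 + Real.sqrt 3 * x))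

/-- The absolutely continuous `T`-invariant probability measure `μ` on `(0,1)`. -/
noncomputable def mu : Measure ℝ :=
  (volume.restrict (Set.Ioo (0 : ℝ) 1)).withDensity fun x => ENNReal.ofReal (fdens x)

/-- The inverse branches `h_{(a,ε)_s}` of the SCF map `T`. -/
noncomputable def h (d : Digit) (x : ℝ) : ℝ :=
  match d.s with
  | Par.e => 1 / (2 * (d.a : ℝ) + (d.eps : ℝ) * x)
  | Par.o =>
      if d.eps = 1 then (((d.a : ℝ) - 1) * x + (d.a : ℝ)) / ((d.a : ℝ) * x + ((d.a : ℝ) + 1))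
      else ((d.a : ℝ) * x + ((d.a : ℝ) - 1)) / (((d.a : ℝ) + 1) * x + (d.a : ℝ))

/-- Composed inverse branch `h_{A^{(n)}} = h_{A₁} ∘ ⋯ ∘ h_{A_n}` of a word. -/
noncomputable def hWord (l : List Digit) : ℝ → ℝ :=
  l.foldr (fun d g => h d ∘ g) id

/-- The dual inverse branches `bar h_{(b,η)_t}`. -/
noncomputable def hbar (d : Digit) (y : ℝ) : ℝ :=
  match d.s with
  | Par.e => (d.eps : ℝ) / (2 * (d.a : ℝ) + y)
  | Par.o =>
      1 / (1 + (d.eps : ℝ) / (((d.a : ℝ) - ((max 0 d.eps : ℤ) : ℝ)) + 1 / (1 + y)))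

/-- The matrix `M_{(a,ε)_s}` associated with the inverse branch `h_{(a,ε)_s}`. -/
noncomputable def Mdig (d : Digit) : Matrix (Fin 2) (Fin 2) ℝ :=
  match d.s with
  | Par.e => !![0, 1; (d.eps : ℝ), 2 * (d.a : ℝ)]
  | Par.o =>
      !![(d.a : ℝ) - ((max 0 d.eps : ℤ) : ℝ), (d.a : ℝ) - ((max 0 d.eps : ℤ) : ℝ) + (d.eps : ℝ);
         (d.a : ℝ) - ((max 0 d.eps : ℤ) : ℝ) + 1, (d.a : ℝ) - ((max 0 d.eps : ℤ) : ℝ) + (d.eps : ℝ) + 1]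

/-- `M_n(x) = M_{(a₁,ε₁)_{s₁}} ⋯ M_{(a_n,ε_n)_{s_n}}`. -/
noncomputable def Mn (n : ℕ) (x : ℝ) : Matrix (Fin 2) (Fin 2) ℝ :=
  ((List.range n).map fun i => Mdig (digit (T^[i] x))).prod

/-- `P_n(x)`: the `(1,2)`-entry of `M_n(x)` (numerator of the `n`-th convergent). -/
noncomputable def Pc (n : ℕ) (x : ℝ) : ℝ := Mn n x 0 1

/-- `Q_n(x)`: the `(2,2)`-entry of `M_n(x)` (denominator of the `n`-th convergent). -/
noncomputable def Qc (n : ℕ) (x : ℝ) : ℝ := Mn n x 1 1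

open scoped Matrix

lemma _root_.Irrational.ne_one_div_int {z : ℝ} (hz : Irrational z) (m : ℤ) : z ≠ 1 / m := by
  simpa using hz.ne_rat (1 / m)

lemma mem_Ioo_one_div_iff {z p q : ℝ} (hz : 0 < z) (hp : 0 < p) (hq : 0 < q) :
    z ∈ Ioo (1 / q) (1 / p) ↔ 1 / z ∈ Ioo p q := by
  rw [mem_Ioo, mem_Ioo, one_div_lt hq hz, lt_one_div hz hp, and_comm]

lemma iota_eq_two_div_sub_one {x : ℝ} (hx : x ≠ -1) : iota x = 2 / (1 + x) - 1 := by
  have : 1 + x ≠ 0 := fun h => hx (by linarith)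
  unfold iota; field_simp; ring

lemma iota_iota {x : ℝ} (hx : x ≠ -1) : iota (iota x) = x := by
  have : 1 + x ≠ 0 := fun h => hx (by linarith)
  unfold iota; field_simp; ring

lemma iota_div {p q : ℝ} (hq : q ≠ 0) : iota (p / q) = (q - p) / (q + p) := by
  unfold iota
  rw [← div_self hq, div_sub_div_same, ← add_div, div_div_div_cancel_right₀ hq]

lemma irrational_iota {x : ℝ} (hx : Irrational x) : Irrational (iota x) := by
  rw [iota_eq_two_div_sub_one (by simpa using hx.ne_int (-1))]
  have : Irrational (1 + x) := by simpa using hx.intCast_add 1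
  simpa [div_eq_mul_inv] using (this.inv.intCast_mul two_ne_zero).sub_intCast 1

lemma iota_mem_Ioo {x : ℝ} (hx : x ∈ Ioo (0 : ℝ) 1) : iota x ∈ Ioo (0 : ℝ) 1 := by
  obtain ⟨h0, h1⟩ := hx
  unfold iota
  exact ⟨div_pos (by linarith) (by linarith), (div_lt_one (by linarith)).2 (by linarith)⟩

lemma iota_le_iota_iff {x y : ℝ} (hx : -1 < x) (hy : -1 < y) : iota x ≤ iota y ↔ y ≤ x := by
  rw [iota_eq_two_div_sub_one hx.ne', iota_eq_two_div_sub_one hy.ne', sub_le_sub_iff_right,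
    div_le_div_iff_of_pos_left two_pos (by linarith) (by linarith), add_le_add_iff_left]

lemma iota_lt_iota_iff {x y : ℝ} (hx : -1 < x) (hy : -1 < y) : iota x < iota y ↔ y < x := by
  rw [iota_eq_two_div_sub_one hx.ne', iota_eq_two_div_sub_one hy.ne', sub_lt_sub_iff_right,
    div_lt_div_iff_of_pos_left two_pos (by linarith) (by linarith), add_lt_add_iff_left]

lemma iota_lt_one_third_iff {y : ℝ} (hy : -1 < y) : iota y < 1 / 3 ↔ 1 / 2 < y := by
  rw [show (1 / 3 : ℝ) = iota (1 / 2) by norm_num [iota], iota_lt_iota_iff hy (by norm_num)]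

lemma iota_mem_Ico_iff {a b y : ℝ} (ha : -1 < a) (hb : -1 < b) (hy : -1 < y) :
    iota y ∈ Ico (iota b) (iota a) ↔ y ∈ Ioc a b := by
  rw [mem_Ico, mem_Ioc, iota_le_iota_iff hb hy, iota_lt_iota_iff hy ha, and_comm]

lemma T_of_le_half {y : ℝ} (h0 : 0 < y) (h : y ≤ 1 / 2) : T y = Te y := by
  rw [T, if_neg h0.not_ge, if_neg (by linarith), if_pos h]

lemma T_of_half_lt {y : ℝ} (h : 1 / 2 < y) (h1 : y < 1) : T y = iota (Te (iota y)) := by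
  rw [T, if_neg (by linarith), if_neg h1.not_ge, if_neg h.not_ge]

lemma valid_e_iff {k ε : ℤ} : Digit.Valid ⟨k, ε, .e⟩ ↔ (1 ≤ k ∧ ε = 1) ∨ (2 ≤ k ∧ ε = -1) := by
  simp only [Digit.Valid, and_true]; omega

lemma valid_o_iff {k ε : ℤ} : Digit.Valid ⟨k, ε, .o⟩ ↔ 2 ≤ k ∧ (ε = 1 ∨ ε = -1) := by
  simp [Digit.Valid]

lemma Te_eq_of_mem_Ioo {z : ℝ} {k ε : ℤ} (hε : ε = 1 ∨ ε = -1)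
    (hw : ε * (1 / z - 2 * k) ∈ Ioo (0 : ℝ) 1) : Te z = ε * (1 / z - 2 * k) := by
  have hfloor : ⌊(1 / z + 1) / 2⌋ = k := by
    rw [Int.floor_eq_iff]
    rcases hε with rfl | rfl <;> push_cast at hw <;> constructor <;> linarith [hw.1, hw.2]
  have habs : |(ε : ℝ)| = 1 := by rcases hε with rfl | rfl <;> norm_num
  rw [Te, hfloor, ← abs_of_pos hw.1, abs_mul, habs, one_mul]

lemma h_e_apply {z : ℝ} {k ε : ℤ} (hε : ε = 1 ∨ ε = -1) :
    h ⟨k, ε, .e⟩ (ε * (1 / z - 2 * k)) = z := by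
  have hεε : (ε : ℝ) * ε = 1 := by rcases hε with rfl | rfl <;> norm_num
  simp only [h]
  rw [← mul_assoc, hεε, one_mul, add_sub_cancel, one_div_one_div]

-- The branch endpoints are rational, so for irrational `z` it does not matter which ends are
-- closed.
lemma mem_branch_e_iff {k ε : ℤ} (hv : Digit.Valid ⟨k, ε, .e⟩) {z : ℝ} (hz : 0 < z)
    (hirr : Irrational z) : z ∈ branch ⟨k, ε, .e⟩ ↔ ε * (1 / z - 2 * k) ∈ Ioo (0 : ℝ) 1 := by
  have hne (m : ℤ) : z ∉ ({1 / (m : ℝ)} : Set ℝ) := hirr.ne_one_div_int m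
  rcases valid_e_iff.1 hv with ⟨hk, rfl⟩ | ⟨hk, rfl⟩ <;> simp only [branch, if_true]
  · have hk' : (1 : ℝ) ≤ k := mod_cast hk
    have hIoo : z ∈ Ioo (1 / (2 * (k : ℝ) + 1)) (1 / (2 * k)) ↔
        ((1 : ℤ) : ℝ) * (1 / z - 2 * k) ∈ Ioo 0 1 := by
      rw [mem_Ioo_one_div_iff hz (by positivity) (by positivity)]
      simp only [mem_Ioo, Int.cast_one, one_mul]
      constructor <;> rintro ⟨h1, h2⟩ <;> constructor <;> linarith
    rw [← hIoo]
    split_ifs with hk1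
    · subst hk1
      have h2 : z ≠ 1 / 2 := by simpa using hne 2
      have h3 : z ≠ 1 / 3 := by simpa using hne 3
      norm_num [← Icc_sdiff_both, h2, h3]
    · rw [← Ico_sdiff_left, Set.mem_sdiff, and_iff_left (by simpa using hne (2 * k + 1))]
  · have hk' : (2 : ℝ) ≤ k := mod_cast hk
    have hIoo : z ∈ Ioo (1 / (2 * (k : ℝ))) (1 / (2 * k - 1)) ↔
        ((-1 : ℤ) : ℝ) * (1 / z - 2 * k) ∈ Ioo 0 1 := by
      rw [mem_Ioo_one_div_iff hz (by linarith) (by positivity)]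
      simp only [mem_Ioo, Int.cast_neg, Int.cast_one]
      constructor <;> rintro ⟨h1, h2⟩ <;> constructor <;> linarith
    rw [← hIoo, if_neg (by omega), if_neg (by omega), ← Ico_sdiff_left, Set.mem_sdiff,
      and_iff_left (by simpa using hne (2 * k))]

lemma branch_e_subset {k ε : ℤ} (hk : 2 ≤ k) : branch ⟨k, ε, .e⟩ ⊆ Ioo 0 (1 / 3) := by
  have hk' : (2 : ℝ) ≤ k := mod_cast hk
  rintro z hz
  simp only [branch, if_neg (show k ≠ 1 by omega)] at hz
  split_ifs at hz <;> obtain ⟨h1, h2⟩ := hz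
  · refine ⟨lt_of_lt_of_le (by positivity) h1, h2.trans_le ?_⟩
    rw [div_le_div_iff₀ (by positivity) (by positivity)]; linarith
  · refine ⟨lt_of_lt_of_le (by positivity) h1, h2.trans_le ?_⟩
    rw [div_le_div_iff₀ (by linarith) (by positivity)]; linarith

lemma le_half_of_mem_branch_e {k ε : ℤ} (hv : Digit.Valid ⟨k, ε, .e⟩) {z : ℝ}
    (hz : z ∈ branch ⟨k, ε, .e⟩) : z ≤ 1 / 2 := by
  rcases eq_or_ne k 1 with rfl | hk
  · simp only [branch, if_true] at hz
    exact hz.2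
  · have := (branch_e_subset (by rw [valid_e_iff] at hv; omega) hz).2
    linarith

lemma Te_step {k ε : ℤ} (hv : Digit.Valid ⟨k, ε, .e⟩) {z : ℝ} (hz : 0 < z)
    (hirr : Irrational z) (hb : z ∈ branch ⟨k, ε, .e⟩) :
    Te z ∈ Ioo (0 : ℝ) 1 ∧ Irrational (Te z) ∧ h ⟨k, ε, .e⟩ (Te z) = z := by
  have hε : ε = 1 ∨ ε = -1 := by rw [valid_e_iff] at hv; omega
  have hw := (mem_branch_e_iff hv hz hirr).1 hb
  have hirr' : Irrational (1 / z - 2 * k) := by simpa using hirr.inv.sub_intCast (2 * k)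
  rw [Te_eq_of_mem_Ioo hε hw]
  exact ⟨hw, hirr'.intCast_mul (by omega), h_e_apply hε⟩

lemma exists_digit_e {z : ℝ} (hz : 0 < z) (hz2 : z ≤ 1 / 2) (hirr : Irrational z) :
    ∃ k ε : ℤ, Digit.Valid ⟨k, ε, .e⟩ ∧ ε * (1 / z - 2 * k) ∈ Ioo (0 : ℝ) 1 := by
  have h2 : (2 : ℝ) ≤ 1 / z := by rw [le_one_div (by norm_num) hz]; linarith
  have hlo : (⌊1 / z⌋ : ℝ) < 1 / z :=
    (Int.floor_le _).lt_of_ne (by simpa using (hirr.inv.ne_int ⌊1 / z⌋).symm)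
  have hhi := Int.lt_floor_add_one (1 / z)
  have hm : 2 ≤ ⌊1 / z⌋ := Int.le_floor.2 (by simpa using h2)
  obtain ⟨j, hj | hj⟩ := Int.even_or_odd' ⌊1 / z⌋ <;> rw [hj] at hlo hhi hm <;>
    push_cast at hlo hhi
  · refine ⟨j, 1, valid_e_iff.2 (Or.inl ⟨by omega, rfl⟩), ?_⟩
    push_cast
    constructor <;> linarith
  · refine ⟨j + 1, -1, valid_e_iff.2 (Or.inr ⟨by omega, rfl⟩), ?_⟩
    push_cast
    constructor <;> linarith

lemma iota_mem_branch_e_iff {k ε : ℤ} (hk : 2 ≤ k) {y : ℝ} (hy : 0 < y) :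
    iota y ∈ branch ⟨k, ε, .e⟩ ↔ y ∈ branch ⟨k, ε, .o⟩ := by
  have hk' : (2 : ℝ) ≤ k := mod_cast hk
  have hpos {p q : ℝ} (hp : 0 ≤ p) (hq : 0 < q) : -1 < p / q := by
    have := div_nonneg hp hq.le; linarith
  have e₁ : iota (k / (k + 1)) = 1 / (2 * k + 1) := by
    unfold iota; field_simp; ring
  have e₂ : iota ((2 * k - 1) / (2 * k + 1)) = 1 / (2 * k) := by
    unfold iota; field_simp; ring
  have e₃ : iota ((k - 1) / k) = 1 / (2 * k - 1) := by
    unfold iota; field_simp; ring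
  simp only [branch, if_neg (show k ≠ 1 by omega)]
  split_ifs
  · rw [← e₁, ← e₂, iota_mem_Ico_iff (hpos (by linarith) (by linarith))
      (hpos (by linarith) (by linarith)) (by linarith)]
  · rw [← e₂, ← e₃, iota_mem_Ico_iff (hpos (by linarith) (by linarith))
      (hpos (by linarith) (by linarith)) (by linarith)]

lemma h_o_eq_iota_h_e {k ε : ℤ} (hk : 1 ≤ k) (hε : ε = 1 ∨ ε = -1) {x : ℝ}
    (hx : x ∈ Ioo (0 : ℝ) 1) : h ⟨k, ε, .o⟩ x = iota (h ⟨k, ε, .e⟩ (iota x)) := by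
  have hk' : (1 : ℝ) ≤ k := mod_cast hk
  obtain ⟨h0, h1⟩ := hx
  have hD : 0 < (2 * k - ε) * x + (2 * k + ε) := by
    rcases hε with rfl | rfl <;> push_cast <;> nlinarith
  have he : h ⟨k, ε, .e⟩ (iota x) = (1 + x) / ((2 * k - ε) * x + (2 * k + ε)) := by
    simp only [h, iota]
    field_simp
    ring
  rw [he, iota_div hD.ne']
  rcases hε with rfl | rfl
  · simp only [h, if_true]
    push_cast at hD ⊢
    rw [div_eq_div_iff (by nlinarith) (by nlinarith)]
    ring
  · simp only [h, show (-1 : ℤ) ≠ 1 by norm_num, if_false]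
    push_cast at hD ⊢
    rw [div_eq_div_iff (by nlinarith) (by nlinarith)]
    ring

lemma exists_digit {y : ℝ} (hy : y ∈ Ioo (0 : ℝ) 1) (hirr : Irrational y) :
    ∃ d : Digit, d.Valid ∧ y ∈ branch d := by
  rcases le_or_gt y (1 / 2) with hy2 | hy2
  · obtain ⟨k, ε, hv, hw⟩ := exists_digit_e hy.1 hy2 hirr
    exact ⟨⟨k, ε, .e⟩, hv, (mem_branch_e_iff hv hy.1 hirr).2 hw⟩
  · have hz := iota_mem_Ioo hy
    have hz_irr := irrational_iota hirr
    have hz3 := (iota_lt_one_third_iff (by linarith [hy.1])).2 hy2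
    obtain ⟨k, ε, hv, hw⟩ := exists_digit_e hz.1 (by linarith) hz_irr
    have hb := (mem_branch_e_iff hv hz.1 hz_irr).2 hw
    obtain ⟨hk, hε⟩ : 2 ≤ k ∧ (ε = 1 ∨ ε = -1) := by
      rcases valid_e_iff.1 hv with ⟨hk, rfl⟩ | ⟨hk, rfl⟩
      · obtain rfl | hk := eq_or_lt_of_le hk
        · simp only [branch, if_true] at hb
          linarith [hb.1]
        · exact ⟨hk, .inl rfl⟩
      · exact ⟨hk, .inr rfl⟩
    exact ⟨⟨k, ε, .o⟩, valid_o_iff.2 ⟨hk, hε⟩, (iota_mem_branch_e_iff hk hy.1).1 hb⟩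

lemma digit_spec {y : ℝ} (hy : y ∈ Ioo (0 : ℝ) 1) (hirr : Irrational y) :
    (digit y).Valid ∧ y ∈ branch (digit y) := by
  have hex := exists_digit hy hirr
  rw [digit, dif_pos hex]
  exact hex.choose_spec

lemma T_step {d : Digit} (hv : d.Valid) {y : ℝ} (hy : y ∈ Ioo (0 : ℝ) 1) (hirr : Irrational y)
    (hb : y ∈ branch d) : T y ∈ Ioo (0 : ℝ) 1 ∧ Irrational (T y) ∧ h d (T y) = y := by
  obtain ⟨k, ε, _ | _⟩ := d
  · rw [T_of_le_half hy.1 (le_half_of_mem_branch_e hv hb)]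
    exact Te_step hv hy.1 hirr hb
  · obtain ⟨hk, hε⟩ := valid_o_iff.1 hv
    have hz := iota_mem_Ioo hy
    have hb' := (iota_mem_branch_e_iff hk hy.1).2 hb
    have hy2 := (iota_lt_one_third_iff (by linarith [hy.1])).1 (branch_e_subset hk hb').2
    obtain ⟨hTe, hTe_irr, hTe_inv⟩ :=
      Te_step (valid_e_iff.2 (by omega)) hz.1 (irrational_iota hirr) hb'
    rw [T_of_half_lt hy2 hy.2, h_o_eq_iota_h_e (by omega) hε (iota_mem_Ioo hTe),
      iota_iota (by linarith [hTe.1]), hTe_inv, iota_iota (by linarith [hy.1])]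
    exact ⟨iota_mem_Ioo hTe, irrational_iota hTe_irr, rfl⟩

lemma T_iterate_mem_Ioo {x : ℝ} (hx : x ∈ Ioo (0 : ℝ) 1) (hirr : Irrational x) (n : ℕ) :
    T^[n] x ∈ Ioo (0 : ℝ) 1 ∧ Irrational (T^[n] x) := by
  induction n with
  | zero => exact ⟨hx, hirr⟩
  | succ n ih =>
    rw [Function.iterate_succ_apply']
    obtain ⟨hv, hb⟩ := digit_spec ih.1 ih.2
    exact (T_step hv ih.1 ih.2 hb).imp_right And.left

noncomputable def digitWord (n : ℕ) (x : ℝ) : List Digit :=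
  (List.range n).map fun i => digit (T^[i] x)

lemma digitWord_succ (n : ℕ) (x : ℝ) :
    digitWord (n + 1) x = digitWord n x ++ [digit (T^[n] x)] := by
  simp [digitWord, List.range_succ]

lemma valid_of_mem_digitWord {x : ℝ} (hx : x ∈ Ioo (0 : ℝ) 1) (hirr : Irrational x) {n : ℕ}
    {d : Digit} (hd : d ∈ digitWord n x) : d.Valid := by
  obtain ⟨i, -, rfl⟩ := List.mem_map.1 hd
  exact (digit_spec (T_iterate_mem_Ioo hx hirr i).1 (T_iterate_mem_Ioo hx hirr i).2).1

lemma hWord_append (l₁ l₂ : List Digit) : hWord (l₁ ++ l₂) = hWord l₁ ∘ hWord l₂ := by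
  induction l₁ with
  | nil => rfl
  | cons d l ih => exact congrArg (h d ∘ ·) ih

lemma eq_hWord_digitWord {x : ℝ} (hx : x ∈ Ioo (0 : ℝ) 1) (hirr : Irrational x) (n : ℕ) :
    x = hWord (digitWord n x) (T^[n] x) := by
  induction n with
  | zero => rfl
  | succ n ih =>
    obtain ⟨hy, hy_irr⟩ := T_iterate_mem_Ioo hx hirr n
    obtain ⟨hv, hb⟩ := digit_spec hy hy_irr
    rw [digitWord_succ, hWord_append, Function.comp_apply, Function.iterate_succ_apply']
    exact ih.trans (congrArg _ (T_step hv hy hy_irr hb).2.2.symm)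

noncomputable def mobius (M : Matrix (Fin 2) (Fin 2) ℝ) (t : ℝ) : ℝ :=
  (M 0 0 * t + M 0 1) / (M 1 0 * t + M 1 1)

lemma mulVec_eq_smul_mobius (M : Matrix (Fin 2) (Fin 2) ℝ) {t : ℝ}
    (ht : M 1 0 * t + M 1 1 ≠ 0) : M *ᵥ ![t, 1] = (M 1 0 * t + M 1 1) • ![mobius M t, 1] := by
  ext i
  fin_cases i <;> simp [Matrix.mulVec, dotProduct, mobius, mul_div_cancel₀ _ ht]

lemma abs_mobius_sub_mobius_le (M : Matrix (Fin 2) (Fin 2) ℝ) (hdet : |M.det| = 1) {t s : ℝ}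
    (ht : 2 ≤ M 1 0 * t + M 1 1) (hs : 2 ≤ M 1 0 * s + M 1 1) :
    |mobius M t - mobius M s| ≤ 1 / 4 * |t - s| := by
  have hdiff : mobius M t - mobius M s =
      M.det * (t - s) / ((M 1 0 * t + M 1 1) * (M 1 0 * s + M 1 1)) := by
    rw [Matrix.det_fin_two, mobius, mobius, div_sub_div _ _ (by linarith) (by linarith)]
    ring
  have hprod : 4 ≤ (M 1 0 * t + M 1 1) * (M 1 0 * s + M 1 1) := by nlinarith
  rw [hdiff, abs_div, abs_mul, hdet, one_mul, abs_of_pos (by linarith : (0 : ℝ) < _ * _),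
    div_le_iff₀ (by linarith)]
  nlinarith [abs_nonneg (t - s)]

lemma det_Mdig (d : Digit) : (Mdig d).det = -d.eps := by
  obtain ⟨k, ε, _ | _⟩ := d <;> simp only [Mdig, Matrix.det_fin_two_of] <;> ring

lemma Mdig_e (k ε : ℤ) : Mdig ⟨k, ε, .e⟩ = !![0, 1; (ε : ℝ), 2 * k] := rfl

lemma Mdig_o_one (k : ℤ) : Mdig ⟨k, 1, .o⟩ = !![(k : ℝ) - 1, k; k, k + 1] := by
  norm_num [Mdig]

lemma Mdig_o_neg_one (k : ℤ) : Mdig ⟨k, -1, .o⟩ = !![(k : ℝ), k - 1; k + 1, k] := by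
  norm_num [Mdig, sub_eq_add_neg]

lemma Mdig_bounds {d : Digit} (hv : d.Valid) {t : ℝ} (ht : t ∈ Icc (0 : ℝ) 1) :
    0 ≤ Mdig d 0 0 * t + Mdig d 0 1 ∧
      Mdig d 0 0 * t + Mdig d 0 1 ≤ Mdig d 1 0 * t + Mdig d 1 1 ∧
      2 ≤ Mdig d 1 0 * t + Mdig d 1 1 := by
  obtain ⟨ht0, ht1⟩ := ht
  obtain ⟨k, ε, _ | _⟩ := d
  · obtain ⟨hk, rfl⟩ | ⟨hk, rfl⟩ := valid_e_iff.1 hv <;>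
      simp only [Mdig_e, Matrix.of_apply, Matrix.cons_val', Matrix.cons_val_zero,
        Matrix.cons_val_one, Matrix.cons_val_fin_one, Int.cast_one, Int.cast_neg]
    · have hk' : (1 : ℝ) ≤ k := mod_cast hk
      exact ⟨by linarith, by linarith, by linarith⟩
    · have hk' : (2 : ℝ) ≤ k := mod_cast hk
      exact ⟨by linarith, by linarith, by linarith⟩
  · obtain ⟨hk, rfl | rfl⟩ := valid_o_iff.1 hv <;>
      simp only [Mdig_o_one, Mdig_o_neg_one, Matrix.of_apply, Matrix.cons_val',
        Matrix.cons_val_zero, Matrix.cons_val_one, Matrix.cons_val_fin_one] <;>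
      have hk' : (2 : ℝ) ≤ k := mod_cast hk
    · exact ⟨by nlinarith, by linarith, by nlinarith⟩
    · exact ⟨by nlinarith, by linarith, by nlinarith⟩

lemma mobius_Mdig {d : Digit} (hv : d.Valid) (t : ℝ) : mobius (Mdig d) t = h d t := by
  obtain ⟨k, ε, _ | _⟩ := d
  · simp only [mobius, Mdig_e, h, Matrix.of_apply, Matrix.cons_val', Matrix.cons_val_zero,
      Matrix.cons_val_one, Matrix.cons_val_fin_one, zero_mul, zero_add, add_comm]
  · obtain ⟨-, rfl | rfl⟩ := valid_o_iff.1 hv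
    · simp only [mobius, Mdig_o_one, h, if_true, Matrix.of_apply, Matrix.cons_val',
        Matrix.cons_val_zero, Matrix.cons_val_one, Matrix.cons_val_fin_one]
    · simp only [mobius, Mdig_o_neg_one, h, show (-1 : ℤ) ≠ 1 by norm_num, if_false,
        Matrix.of_apply, Matrix.cons_val', Matrix.cons_val_zero, Matrix.cons_val_one,
        Matrix.cons_val_fin_one]

lemma mapsTo_h {d : Digit} (hv : d.Valid) : MapsTo (h d) (Icc (0 : ℝ) 1) (Icc (0 : ℝ) 1) := by
  intro t ht
  obtain ⟨h0, h1, h2⟩ := Mdig_bounds hv ht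
  rw [← mobius_Mdig hv, mobius]
  exact ⟨div_nonneg h0 (by linarith), (div_le_one (by linarith)).2 h1⟩

lemma lipschitzOnWith_h {d : Digit} (hv : d.Valid) :
    LipschitzOnWith (1 / 4) (h d) (Icc (0 : ℝ) 1) := by
  have hdet : |(Mdig d).det| = 1 := by
    rw [det_Mdig]
    rcases hv with ⟨-, hε | hε⟩ | ⟨-, hε, -⟩ <;> simp [hε]
  refine LipschitzOnWith.of_dist_le_mul fun t ht s hs => ?_
  rw [← mobius_Mdig hv, ← mobius_Mdig hv, Real.dist_eq, Real.dist_eq]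
  simpa using abs_mobius_sub_mobius_le _ hdet (Mdig_bounds hv ht).2.2 (Mdig_bounds hv hs).2.2

lemma mapsTo_hWord {l : List Digit} (hl : ∀ d ∈ l, d.Valid) :
    MapsTo (hWord l) (Icc (0 : ℝ) 1) (Icc (0 : ℝ) 1) := by
  induction l with
  | nil => exact mapsTo_id _
  | cons d l ih =>
    obtain ⟨hd, hl⟩ := List.forall_mem_cons.1 hl
    exact (mapsTo_h hd).comp (ih hl)

lemma lipschitzOnWith_hWord {l : List Digit} (hl : ∀ d ∈ l, d.Valid) :
    LipschitzOnWith ((1 / 4) ^ l.length) (hWord l) (Icc (0 : ℝ) 1) := by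
  induction l with
  | nil =>
    rw [List.length_nil, pow_zero]
    exact LipschitzWith.id.lipschitzOnWith
  | cons d l ih =>
    obtain ⟨hd, hl⟩ := List.forall_mem_cons.1 hl
    rw [List.length_cons, pow_succ']
    exact (lipschitzOnWith_h hd).comp (ih hl) (mapsTo_hWord hl)

lemma prod_Mdig_mulVec {l : List Digit} (hl : ∀ d ∈ l, d.Valid) {t : ℝ}
    (ht : t ∈ Icc (0 : ℝ) 1) :
    ∃ c : ℝ, 0 < c ∧ (l.map Mdig).prod *ᵥ ![t, 1] = c • ![hWord l t, 1] := by
  induction l with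
  | nil => exact ⟨1, one_pos, by rw [List.map_nil, List.prod_nil, Matrix.one_mulVec, one_smul]; rfl⟩
  | cons d l ih =>
    obtain ⟨hd, hl⟩ := List.forall_mem_cons.1 hl
    obtain ⟨c, hc, hcv⟩ := ih hl
    have hden := (Mdig_bounds hd (mapsTo_hWord hl ht)).2.2
    refine ⟨(Mdig d 1 0 * hWord l t + Mdig d 1 1) * c, by positivity, ?_⟩
    rw [List.map_cons, List.prod_cons, ← Matrix.mulVec_mulVec, hcv, Matrix.mulVec_smul,
      mulVec_eq_smul_mobius _ (by linarith), mobius_Mdig hd, smul_smul, mul_comm c]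
    rfl

lemma prod_Mdig_div_eq_hWord_zero {l : List Digit} (hl : ∀ d ∈ l, d.Valid) :
    (l.map Mdig).prod 0 1 / (l.map Mdig).prod 1 1 = hWord l 0 := by
  obtain ⟨c, hc, hcv⟩ := prod_Mdig_mulVec hl (left_mem_Icc.2 zero_le_one)
  have h0 := congrFun hcv 0
  have h1 := congrFun hcv 1
  simp only [Matrix.mulVec, dotProduct, Fin.sum_univ_two, Matrix.cons_val_zero,
    Matrix.cons_val_one, Matrix.cons_val_fin_one, mul_zero, mul_one, zero_add, Pi.smul_apply,
    smul_eq_mul] at h0 h1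
  rw [h0, h1, mul_div_cancel_left₀ _ hc.ne']

lemma Mn_eq_prod (n : ℕ) (x : ℝ) : Mn n x = ((digitWord n x).map Mdig).prod := by
  rw [Mn, digitWord, List.map_map]
  rfl

lemma convergent_eq_hWord {x : ℝ} (hx : x ∈ Ioo (0 : ℝ) 1) (hirr : Irrational x) (n : ℕ) :
    Pc n x / Qc n x = hWord (digitWord n x) 0 := by
  rw [Pc, Qc, Mn_eq_prod]
  exact prod_Mdig_div_eq_hWord_zero fun _ hd => valid_of_mem_digitWord hx hirr hd

lemma abs_sub_convergent_le {x : ℝ} (hx : x ∈ Ioo (0 : ℝ) 1) (hirr : Irrational x) (n : ℕ) :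
    |x - Pc n x / Qc n x| ≤ (1 / 4) ^ n := by
  have hlip := lipschitzOnWith_hWord fun _ hd => valid_of_mem_digitWord hx hirr (n := n) hd
  have ht := (T_iterate_mem_Ioo hx hirr n).1
  have hlen : (digitWord n x).length = n := by simp [digitWord]
  calc |x - Pc n x / Qc n x|
      = dist (hWord (digitWord n x) (T^[n] x)) (hWord (digitWord n x) 0) := by
        rw [convergent_eq_hWord hx hirr, ← eq_hWord_digitWord hx hirr, Real.dist_eq]
    _ ≤ (1 / 4) ^ n * dist (T^[n] x) 0 := by
        simpa [hlen] using
          hlip.dist_le_mul _ (Ioo_subset_Icc_self ht) 0 (left_mem_Icc.2 zero_le_one)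
    _ ≤ (1 / 4) ^ n := by
        rw [Real.dist_eq, sub_zero, abs_of_pos ht.1]
        exact mul_le_of_le_one_right (by positivity) ht.2.le

/-- for irrational `x ∈ (0,1)`,
`x = h_{(a₁,ε₁)_{s₁}} ∘ ⋯ ∘ h_{(a_n,ε_n)_{s_n}} (Tⁿ x)`, the convergents
satisfy `|x − P_n/Q_n| ≤ 4^{−n}`, and hence `P_n/Q_n → x`. -/
theorem convergents_tend_to_x :
    ∀ x ∈ Set.Ioo (0 : ℝ) 1, Irrational x →
      (∀ n : ℕ, 1 ≤ n →
        x = hWord ((List.range n).map fun i => digit (T^[i] x)) (T^[n] x) ∧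
        |x - Pc n x / Qc n x| ≤ (1/4 : ℝ) ^ n) ∧
      Filter.Tendsto (fun n : ℕ => Pc n x / Qc n x) Filter.atTop (nhds x) := by
  intro x hx hirr
  refine ⟨fun n _ => ⟨eq_hWord_digitWord hx hirr n, abs_sub_convergent_le hx hirr n⟩, ?_⟩
  have hgeom : Tendsto (fun n : ℕ => (1 / 4 : ℝ) ^ n) atTop (𝓝 0) :=
    tendsto_pow_atTop_nhds_zero_of_lt_one (by norm_num) (by norm_num)
  refine tendsto_iff_dist_tendsto_zero.2 (squeeze_zero (fun _ => dist_nonneg) (fun n => ?_) hgeom)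
  rw [Real.dist_eq, abs_sub_comm]
  exact abs_sub_convergent_le hx hirr n

end SCF
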